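/- (Deterministic error bounds.) Let X ∈ ℝ^{n×p}, β* ∈ ℝ^p with s* = ‖β*‖₀, and y = Xβ* + ε for some ε ∈ ℝⁿ. Let δ ≥ 0 and suppose ‖Xᵀε‖∞ ≤ δ. Suppose β̂ ∈ ℝ^p satisfies ‖Xᵀ(y − Xβ̂)‖∞ ≤ δ and ‖β̂‖₀ ≤ s*, and that γ(2s*) > 0. Then: ‖β̂ − β*‖₁ ≤ 4 [γ(2s*)]⁻² s* δ; ‖β̂ − β*‖₂² ≤ 8 [γ(2s*)]⁻⁴ s* δ²; and ‖X(β̂ − β*)‖₂² ≤ 8 [γ(2s*)]⁻² s* δ². -/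

import Mathlib

/-!
Put `h = β̂ - β*`. It has at most `2s*` nonzero entries, and `XᵀXh = Xᵀε - Xᵀ(y - Xβ̂)`, so
`‖XᵀXh‖∞ ≤ 2δ` and hence `‖Xh‖₂² = ⟨h, XᵀXh⟩ ≤ 2δ‖h‖₁`. Cauchy–Schwarz on the support of `h`
gives `‖h‖₁² ≤ 2s*‖h‖₂²`, and the definition of `γ = γ(2s*)` gives `γ²‖h‖₂² ≤ ‖Xh‖₂²`.
Chaining these, `γ²‖h‖₁² ≤ 4s*δ‖h‖₁`, i.e. `γ²‖h‖₁ ≤ 4s*δ`; the two other bounds follow by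
feeding this back into `‖Xh‖₂² ≤ 2δ‖h‖₁` and `γ²‖h‖₂² ≤ ‖Xh‖₂²`.
-/

noncomputable section
open Classical

/-- The ℓ₀ "norm": number of nonzero entries. -/
def l0 {p : ℕ} (β : Fin p → ℝ) : ℕ := (Finset.univ.filter fun i => β i ≠ 0).card

/-- ℓ₁-norm. -/
def l1 {p : ℕ} (β : Fin p → ℝ) : ℝ := ∑ i, |β i|

/-- Squared Euclidean norm. -/
def l2sq {q : ℕ} (v : Fin q → ℝ) : ℝ := ∑ i, (v i) ^ 2

/-- Euclidean norm. -/
def l2 {q : ℕ} (v : Fin q → ℝ) : ℝ := Real.sqrt (l2sq v)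

/-- `γ(k) = min{ ‖Xθ‖₂/‖θ‖₂ : θ ≠ 0, ‖θ‖₀ ≤ k }`. -/
def gammaX {n p : ℕ} (X : Matrix (Fin n) (Fin p) ℝ) (k : ℕ) : ℝ :=
  sInf {r : ℝ | ∃ θ : Fin p → ℝ, θ ≠ 0 ∧ l0 θ ≤ k ∧ r = l2 (X.mulVec θ) / l2 θ}

open Matrix

section Norms

variable {p : ℕ}

lemma l1_nonneg (v : Fin p → ℝ) : 0 ≤ l1 v :=
  Finset.sum_nonneg fun i _ => abs_nonneg (v i)

lemma l2sq_nonneg (v : Fin p → ℝ) : 0 ≤ l2sq v :=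
  Finset.sum_nonneg fun i _ => sq_nonneg (v i)

lemma l2_nonneg (v : Fin p → ℝ) : 0 ≤ l2 v :=
  Real.sqrt_nonneg _

lemma l2sq_eq_dotProduct (v : Fin p → ℝ) : l2sq v = v ⬝ᵥ v := by
  simp only [l2sq, dotProduct, sq]

lemma l2_sq (v : Fin p → ℝ) : l2 v ^ 2 = l2sq v :=
  Real.sq_sqrt (l2sq_nonneg v)

lemma l0_sub_le (a b : Fin p → ℝ) : l0 (a - b) ≤ l0 a + l0 b := by
  refine (Finset.card_le_card fun i hi => ?_).trans (Finset.card_union_le _ _)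
  simp only [Finset.mem_filter, Finset.mem_union, Finset.mem_univ, true_and,
    Pi.sub_apply] at hi ⊢
  by_contra! h
  exact hi (by rw [h.1, h.2, sub_zero])

lemma sq_l1_le_l0_mul_l2sq (v : Fin p → ℝ) : l1 v ^ 2 ≤ l0 v * l2sq v := by
  have hsupp : ∑ i with v i ≠ 0, |v i| = l1 v :=
    Finset.sum_filter_of_ne fun i _ hi => abs_ne_zero.mp hi
  calc l1 v ^ 2 = (∑ i with v i ≠ 0, |v i|) ^ 2 := by rw [hsupp]
    _ ≤ l0 v * ∑ i with v i ≠ 0, |v i| ^ 2 := sq_sum_le_card_mul_sum_sq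
    _ ≤ l0 v * l2sq v := by
      gcongr
      simp only [sq_abs]
      exact Finset.sum_le_sum_of_subset_of_nonneg (Finset.filter_subset _ _)
        fun i _ _ => sq_nonneg (v i)

lemma dotProduct_le_mul_l1 {v w : Fin p → ℝ} {C : ℝ} (hw : ∀ j, |w j| ≤ C) :
    v ⬝ᵥ w ≤ C * l1 v := by
  rw [l1, Finset.mul_sum]
  refine Finset.sum_le_sum fun j _ => ?_
  calc v j * w j ≤ |v j| * |w j| := by rw [← abs_mul]; exact le_abs_self _
    _ ≤ C * |v j| := by rw [mul_comm]; gcongr; exact hw j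

end Norms

section DesignMatrix

variable {n p : ℕ} (X : Matrix (Fin n) (Fin p) ℝ)

lemma zero_mem_lowerBounds_gammaX (k : ℕ) :
    0 ∈ lowerBounds {r : ℝ | ∃ θ : Fin p → ℝ, θ ≠ 0 ∧ l0 θ ≤ k ∧ r = l2 (X *ᵥ θ) / l2 θ} :=
  fun _ ⟨_, _, _, hr⟩ => hr ▸ div_nonneg (l2_nonneg _) (l2_nonneg _)

lemma gammaX_nonneg (k : ℕ) : 0 ≤ gammaX X k :=
  Real.sInf_nonneg (zero_mem_lowerBounds_gammaX X k)

lemma gammaX_mul_l2_le {k : ℕ} {θ : Fin p → ℝ} (hθ : l0 θ ≤ k) :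
    gammaX X k * l2 θ ≤ l2 (X *ᵥ θ) := by
  rcases (l2_nonneg θ).eq_or_lt with h0 | hpos
  · rw [← h0, mul_zero]
    exact l2_nonneg _
  have hθ0 : θ ≠ 0 := by
    rintro rfl
    simp [l2, l2sq] at hpos
  exact (le_div_iff₀ hpos).mp
    (csInf_le ⟨0, zero_mem_lowerBounds_gammaX X k⟩ ⟨θ, hθ0, hθ, rfl⟩)

lemma sq_gammaX_mul_l2sq_le {k : ℕ} {θ : Fin p → ℝ} (hθ : l0 θ ≤ k) :
    gammaX X k ^ 2 * l2sq θ ≤ l2sq (X *ᵥ θ) := by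
  rw [← l2_sq, ← l2_sq, ← mul_pow]
  exact pow_le_pow_left₀ (mul_nonneg (gammaX_nonneg X k) (l2_nonneg θ))
    (gammaX_mul_l2_le X hθ) 2

lemma l2sq_mulVec_eq_dotProduct (h : Fin p → ℝ) : l2sq (X *ᵥ h) = h ⬝ᵥ (Xᵀ *ᵥ (X *ᵥ h)) := by
  rw [l2sq_eq_dotProduct, dotProduct_mulVec h Xᵀ, vecMul_transpose]

end DesignMatrix

/-- Deterministic error bounds: if `‖Xᵀε‖∞ ≤ δ`,
`‖Xᵀ(y − Xβ̂)‖∞ ≤ δ`, `‖β̂‖₀ ≤ s*` and `γ(2s*) > 0`, then the ℓ₁, ℓ₂ and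
prediction error bounds hold. -/
theorem stmt5 {n p : ℕ} (X : Matrix (Fin n) (Fin p) ℝ)
    (βstar : Fin p → ℝ) (s : ℕ) (hs : s = l0 βstar)
    (ε : Fin n → ℝ) (y : Fin n → ℝ) (hy : y = X.mulVec βstar + ε)
    (δ : ℝ) (hδ0 : 0 ≤ δ)
    (hε : ∀ j, |X.transpose.mulVec ε j| ≤ δ)
    (βhat : Fin p → ℝ)
    (hfeas : ∀ j, |X.transpose.mulVec (y - X.mulVec βhat) j| ≤ δ)
    (hsparse : l0 βhat ≤ s)
    (hγ : 0 < gammaX X (2 * s)) :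
    l1 (βhat - βstar) ≤ 4 * ((gammaX X (2 * s)) ^ 2)⁻¹ * s * δ ∧
    l2sq (βhat - βstar) ≤ 8 * ((gammaX X (2 * s)) ^ 4)⁻¹ * s * δ ^ 2 ∧
    l2sq (X.mulVec (βhat - βstar)) ≤ 8 * ((gammaX X (2 * s)) ^ 2)⁻¹ * s * δ ^ 2 := by
  set γ := gammaX X (2 * s)
  set h := βhat - βstar
  have hsupp : l0 h ≤ 2 * s := (l0_sub_le βhat βstar).trans (by omega)
  have hgram (j : Fin p) : |(Xᵀ *ᵥ (X *ᵥ h)) j| ≤ 2 * δ := by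
    have : X *ᵥ h = ε - (y - X *ᵥ βhat) := by rw [mulVec_sub, hy]; abel
    rw [this, mulVec_sub, Pi.sub_apply, two_mul]
    exact (abs_sub _ _).trans (add_le_add (hε j) (hfeas j))
  have hpred : l2sq (X *ᵥ h) ≤ 2 * δ * l1 h :=
    (l2sq_mulVec_eq_dotProduct X h).trans_le (dotProduct_le_mul_l1 hgram)
  have hcs : l1 h ^ 2 ≤ 2 * s * l2sq h :=
    (sq_l1_le_l0_mul_l2sq h).trans
      (mul_le_mul_of_nonneg_right (by exact_mod_cast hsupp) (l2sq_nonneg h))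
  have hre : γ ^ 2 * l2sq h ≤ l2sq (X *ᵥ h) := sq_gammaX_mul_l2sq_le X hsupp
  have hl1 : γ ^ 2 * l1 h ≤ 4 * s * δ := by
    rcases (l1_nonneg h).eq_or_lt with hb | hb
    · rw [← hb, mul_zero]; positivity
    refine le_of_mul_le_mul_right ?_ hb
    calc γ ^ 2 * l1 h * l1 h = γ ^ 2 * l1 h ^ 2 := by ring
      _ ≤ γ ^ 2 * (2 * s * l2sq h) := by gcongr
      _ = 2 * s * (γ ^ 2 * l2sq h) := by ring
      _ ≤ 2 * s * (2 * δ * l1 h) := by gcongr ?_ * ?_; exact hre.trans hpred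
      _ = 4 * s * δ * l1 h := by ring
  have hXh : γ ^ 2 * l2sq (X *ᵥ h) ≤ 8 * s * δ ^ 2 :=
    calc γ ^ 2 * l2sq (X *ᵥ h) ≤ γ ^ 2 * (2 * δ * l1 h) := by gcongr
      _ = 2 * δ * (γ ^ 2 * l1 h) := by ring
      _ ≤ 2 * δ * (4 * s * δ) := by gcongr
      _ = 8 * s * δ ^ 2 := by ring
  have hl2 : γ ^ 4 * l2sq h ≤ 8 * s * δ ^ 2 :=
    calc γ ^ 4 * l2sq h = γ ^ 2 * (γ ^ 2 * l2sq h) := by ring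
      _ ≤ γ ^ 2 * l2sq (X *ᵥ h) := by gcongr
      _ ≤ 8 * s * δ ^ 2 := hXh
  refine ⟨?_, ?_, ?_⟩
  · rwa [show 4 * (γ ^ 2)⁻¹ * s * δ = 4 * s * δ / γ ^ 2 by ring, le_div_iff₀' (by positivity)]
  · rwa [show 8 * (γ ^ 4)⁻¹ * s * δ ^ 2 = 8 * s * δ ^ 2 / γ ^ 4 by ring,
      le_div_iff₀' (by positivity)]
  · rwa [show 8 * (γ ^ 2)⁻¹ * s * δ ^ 2 = 8 * s * δ ^ 2 / γ ^ 2 by ring,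
      le_div_iff₀' (by positivity)]
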